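/- arXiv:1401.2485 — 5 statements merged into one kernel-verified Lean document; each statement's English description precedes it below -/
import Mathlib

section
/- Let T be a C*-algebra, K ⊆ T a closed two-sided ideal, and γ an action of the circle group 𝕋 on T by *-automorphisms such that z ↦ γ_z(x) is norm-continuous for every x ∈ T and γ_z(K) = K for all z ∈ 𝕋. Define E : T → T by E(x) = ∫_𝕋 γ_z(x) dz (normalized Haar measure), let C = E(T) be the fixed-point algebra, and assume C is the norm closure of an increasing union of finite-dimensional *-subalgebras C_0 ⊆ C_1 ⊆ ⋯. Let Tr be a lower semicontinuous tracial weight on C, set φ = Tr ∘ E on T⁺, and N_φ = {x ∈ T : φ(x*x) = 0}. Assume N_φ is a two-sided ideal of T and C_k⁺ ∩ N_φ ⊆ K for every k. Then every projection p ∈ C with φ(p) = 0 belongs to K. -/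
/-!
Since `N_φ` is an ideal containing `p`, and `C_k⁺ ∩ N_φ ⊆ K`, it suffices to move `p` by an
invertible conjugation into a positive element of some `C_k`. Approximate `p` by a self-adjoint
`y ∈ C_k`; then `‖y² - y‖` is small, so by spectral mapping the spectrum of `y` clusters near
`0` and `1`, and a continuous function of `y` that is `0` near `0` and `1` near `1` is a projection
`q ∈ C_k` close to `p`. Two idempotents this close are similar, via `z = qp + (1 - q)(1 - p)`,
and both ideals `N_φ` and `K` are invariant under similarity.
-/

open scoped ENNReal

theorem abs_lt_or_abs_sub_one_lt_of_abs_mul_sub_self_lt {t : ℝ} (h : |t * t - t| < 2 / 9) :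
    |t| < 1 / 3 ∨ |t - 1| < 1 / 3 := by
  by_contra! h'
  obtain ⟨h0, h1⟩ := h'
  rw [abs_lt] at h
  cases abs_cases t <;> cases abs_cases (t - 1) <;> nlinarith

theorem IsIdempotentElem.norm_mul_self_sub_self_le {A : Type*} [NonUnitalNormedRing A] {p : A}
    (hp : IsIdempotentElem p) (y : A) :
    ‖y * y - y‖ ≤ ‖y - p‖ * (‖y‖ + ‖p‖ + 1) := by
  have h : y * y - y = (y - p) * y + p * (y - p) - (y - p) := by
    rw [mul_sub p y p, hp.eq]
    noncomm_ring
  calc ‖y * y - y‖ ≤ ‖(y - p) * y‖ + ‖p * (y - p)‖ + ‖y - p‖ := by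
        rw [h]; exact (norm_sub_le _ _).trans (by gcongr; exact norm_add_le _ _)
    _ ≤ ‖y - p‖ * ‖y‖ + ‖p‖ * ‖y - p‖ + ‖y - p‖ := by
        gcongr <;> exact norm_mul_le _ _
    _ = ‖y - p‖ * (‖y‖ + ‖p‖ + 1) := by ring

theorem IsIdempotentElem.exists_units_mul_eq_mul_of_norm_sub_lt {A : Type*} [NormedRing A]
    [CompleteSpace A] {p q : A} (hp : IsIdempotentElem p) (hq : IsIdempotentElem q)
    (h : ‖p - q‖ * (‖p‖ + ‖q‖) < 1) : ∃ u : Aˣ, ↑u * p = q * ↑u := by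
  set z := q * p + (1 - q) * (1 - p)
  have hzp : z * p = q * z := by
    simp only [z, add_mul, mul_add, sub_mul, mul_sub, one_mul, mul_one, mul_assoc, hp.eq,
      ← mul_assoc q q, hq.eq]
    abel
  have hz : 1 - z = (p - q) * p + q * (q - p) := by
    simp only [z, sub_mul, mul_sub, one_mul, mul_one, hp.eq, hq.eq]
    abel
  have hz_norm : ‖1 - z‖ < 1 :=
    calc ‖1 - z‖ ≤ ‖p - q‖ * ‖p‖ + ‖q‖ * ‖q - p‖ := by
          rw [hz]; exact (norm_add_le _ _).trans (add_le_add (norm_mul_le _ _) (norm_mul_le _ _))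
      _ = ‖p - q‖ * (‖p‖ + ‖q‖) := by rw [norm_sub_rev q p]; ring
      _ < 1 := h
  obtain ⟨u, hu⟩ := isUnit_one_sub_of_norm_lt_one hz_norm
  rw [sub_sub_cancel] at hu
  exact ⟨u, hu ▸ hzp⟩

theorem TwoSidedIdeal.mem_iff_of_units_mul_eq_mul {R : Type*} [Ring R] (I : TwoSidedIdeal R)
    {u : Rˣ} {p q : R} (h : ↑u * p = q * ↑u) : p ∈ I ↔ q ∈ I := by
  have hq : q = u * p * ↑u⁻¹ := by rw [h, mul_assoc, Units.mul_inv, mul_one]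
  have hp : p = ↑u⁻¹ * q * u := by rw [mul_assoc, ← h, ← mul_assoc, Units.inv_mul, one_mul]
  exact ⟨fun hpI => hq ▸ I.mul_mem_right _ _ (I.mul_mem_left _ _ hpI),
    fun hqI => hp ▸ I.mul_mem_right _ _ (I.mul_mem_left _ _ hqI)⟩

section NonUnitalCStarAlgebra

variable {A : Type*} [NonUnitalCStarAlgebra A]

lemma IsSelfAdjoint.abs_lt_or_abs_sub_one_lt_of_mem_quasispectrum {y : A} (hy : IsSelfAdjoint y)
    (h : ‖y * y - y‖ < 2 / 9) {t : ℝ} (ht : t ∈ quasispectrum ℝ y) :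
    |t| < 1 / 3 ∨ |t - 1| < 1 / 3 := by
  have hcfc : cfcₙ (fun s : ℝ => s * s - s) y = y * y - y := by
    rw [cfcₙ_sub (fun s : ℝ => s * s) (fun s => s) y, cfcₙ_mul (fun s : ℝ => s) (fun s => s) y,
      cfcₙ_id' ℝ y]
  refine abs_lt_or_abs_sub_one_lt_of_abs_mul_sub_self_lt ?_
  calc |t * t - t| = ‖t * t - t‖ := rfl
    _ ≤ ‖cfcₙ (fun s : ℝ => s * s - s) y‖ := norm_apply_le_norm_cfcₙ (fun s : ℝ => s * s - s) y ht
    _ < 2 / 9 := hcfc ▸ h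

lemma exists_isStarProjection_mem_of_quasispectrum_near {S : NonUnitalStarSubalgebra ℂ A}
    [IsClosed (S : Set A)] {y : A} (hy : IsSelfAdjoint y) (hyS : y ∈ S)
    (hσ : ∀ t ∈ quasispectrum ℝ y, |t| < 1 / 3 ∨ |t - 1| < 1 / 3) :
    ∃ q ∈ S, IsStarProjection q ∧ ‖y - q‖ ≤ 1 / 3 := by
  set f : ℝ → ℝ := fun t => min 1 (max 0 (3 * t - 1))
  have hf_zero : ∀ t : ℝ, |t| < 1 / 3 → f t = 0 := fun t ht => by
    have := (abs_lt.1 ht).2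
    simp only [f]; rw [max_eq_left (by linarith), min_eq_right zero_le_one]
  have hf_one : ∀ t : ℝ, |t - 1| < 1 / 3 → f t = 1 := fun t ht => by
    have := (abs_lt.1 ht).1
    simp only [f]; rw [max_eq_right (by linarith), min_eq_left (by linarith)]
  have hf : Continuous f := by fun_prop
  refine ⟨cfcₙ f y, cfcₙ_mem f hyS, ?_, ?_⟩
  · refine isStarProjection_iff_quasispectrum_subset_and_isSelfAdjoint.2
      ⟨?_, cfcₙ_predicate f y⟩
    rw [cfcₙ_map_quasispectrum f y]
    rintro - ⟨t, ht, rfl⟩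
    rcases hσ t ht with h | h
    · simp [hf_zero t h]
    · simp [hf_one t h]
  · rw [show y - cfcₙ f y = cfcₙ (fun t => t - f t) y by rw [cfcₙ_sub _ f y, cfcₙ_id' ℝ y]]
    refine norm_cfcₙ_le fun t ht => ?_
    rw [Real.norm_eq_abs]
    rcases hσ t ht with h | h
    · rw [hf_zero t h, sub_zero]; exact h.le
    · rw [hf_one t h]; exact h.le

lemma IsSelfAdjoint.norm_sub_realPart_le {p : A} (hp : IsSelfAdjoint p) (x : A) :
    ‖p - (realPart x : A)‖ ≤ ‖p - x‖ := by
  have : p - (realPart x : A) = (realPart (p - x) : A) := by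
    rw [map_sub, AddSubgroupClass.coe_sub, hp.coe_realPart]
  rw [this]
  exact realPart.norm_le (p - x)

lemma NonUnitalStarSubalgebra.realPart_mem (S : NonUnitalStarSubalgebra ℂ A) {x : A}
    (hx : x ∈ S) : (realPart x : A) ∈ S := by
  rw [realPart_apply_coe, ← Complex.coe_smul]
  exact SMulMemClass.smul_mem _ (add_mem hx (star_mem hx))

lemma IsStarProjection.exists_isStarProjection_mem_of_norm_sub_lt
    {S : NonUnitalStarSubalgebra ℂ A} [IsClosed (S : Set A)] {p x : A}
    (hp : IsStarProjection p) (hxS : x ∈ S) (hpx : ‖p - x‖ < 1 / 20) :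
    ∃ q ∈ S, IsStarProjection q ∧ ‖p - q‖ < 1 / 2 := by
  set y : A := (realPart x : A)
  have hy : IsSelfAdjoint y := (realPart x).2
  have hpy : ‖p - y‖ < 1 / 20 := (hp.isSelfAdjoint.norm_sub_realPart_le x).trans_lt hpx
  have hp1 : ‖p‖ ≤ 1 := hp.norm_le
  have hy_norm : ‖y‖ ≤ 1 + 1 / 20 := by
    calc ‖y‖ ≤ ‖p‖ + ‖p - y‖ := norm_le_norm_add_norm_sub' y p |>.trans_eq (by rw [norm_sub_rev])
      _ ≤ 1 + 1 / 20 := add_le_add hp1 hpy.le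
  have hyy : ‖y * y - y‖ < 2 / 9 :=
    calc ‖y * y - y‖ ≤ ‖y - p‖ * (‖y‖ + ‖p‖ + 1) := hp.isIdempotentElem.norm_mul_self_sub_self_le y
      _ ≤ 1 / 20 * ((1 + 1 / 20) + 1 + 1) := by rw [norm_sub_rev]; gcongr
      _ < 2 / 9 := by norm_num
  obtain ⟨q, hqS, hq, hyq⟩ := exists_isStarProjection_mem_of_quasispectrum_near hy
    (S.realPart_mem hxS) fun t ht => hy.abs_lt_or_abs_sub_one_lt_of_mem_quasispectrum hyy ht
  exact ⟨q, hqS, hq, by linarith [norm_sub_le_norm_sub_add_norm_sub p y q]⟩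

end NonUnitalCStarAlgebra

theorem statement2_general
    {T : Type*} [NormedRing T] [StarRing T] [CStarRing T]
    [NormedAlgebra ℂ T] [StarModule ℂ T] [CompleteSpace T]
    [PartialOrder T] [StarOrderedRing T]
    (K : TwoSidedIdeal T)
    (E : T → T)
    (C : Set T)
    (Ck : ℕ → NonUnitalStarSubalgebra ℂ T)
    (hCk_fd : ∀ k, FiniteDimensional ℂ (Ck k))
    (hCk_dense : C ⊆ closure (⋃ k, (Ck k : Set T)))
    (Tr : T → ℝ≥0∞)
    (Nφ : Set T) (hNφ : Nφ = {x : T | Tr (E (star x * x)) = 0})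
    (hNφ_ideal : ∃ I : TwoSidedIdeal T, (I : Set T) = Nφ)
    (hCk_Nφ : ∀ k, {x : T | x ∈ Ck k ∧ 0 ≤ x} ∩ Nφ ⊆ (K : Set T)) :
    ∀ p : T, p ∈ C → IsSelfAdjoint p → p * p = p → Tr (E p) = 0 → p ∈ K := by
  intro p hpC hp_sa hp_idem hp_tr
  let _ : CStarAlgebra T := {}
  obtain ⟨I, hI⟩ := hNφ_ideal
  have hp : IsStarProjection p := ⟨hp_idem, hp_sa⟩
  have hpI : p ∈ I := by
    rw [← SetLike.mem_coe, hI, hNφ, Set.mem_ofPred_eq, hp_sa.star_eq, hp_idem]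
    exact hp_tr
  obtain ⟨x, hx, hpx⟩ := Metric.mem_closure_iff.1 (hCk_dense hpC) (1 / 20) (by norm_num)
  obtain ⟨k, hxk⟩ := Set.mem_iUnion.1 hx
  have := hCk_fd k
  have : IsClosed (Ck k : Set T) :=
    Submodule.closed_of_finiteDimensional (Ck k).toNonUnitalSubalgebra.toSubmodule
  obtain ⟨q, hqk, hq, hpq⟩ :=
    hp.exists_isStarProjection_mem_of_norm_sub_lt hxk (by rwa [← dist_eq_norm])
  obtain ⟨u, hu⟩ := hp.isIdempotentElem.exists_units_mul_eq_mul_of_norm_sub_lt hq.isIdempotentElem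
    (by nlinarith [hp.norm_le, hq.norm_le, norm_nonneg (p - q)])
  have hqK : q ∈ K := hCk_Nφ k ⟨⟨hqk, hq.nonneg⟩, hI ▸ (I.mem_iff_of_units_mul_eq_mul hu).1 hpI⟩
  exact (K.mem_iff_of_units_mul_eq_mul hu).2 hqK

/-- With the setup of Statement 0 (C*-algebra `T`, closed two-sided ideal `K`,
point-norm continuous circle action `γ` preserving `K`, conditional expectation
`E x = ∫_𝕋 γ_z(x) dz` onto the AF fixed-point algebra `C = E(T)` with finite-dimensional
subalgebras `C_k`, lower semicontinuous tracial weight `Tr` on `C`, `φ = Tr ∘ E`,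
`N_φ = {x | φ(x*x) = 0}` a two-sided ideal, `C_k⁺ ∩ N_φ ⊆ K`):
every projection `p ∈ C` with `φ(p) = 0` belongs to `K`. -/
theorem statement2
    {T : Type*} [NormedRing T] [StarRing T] [CStarRing T]
    [NormedAlgebra ℂ T] [StarModule ℂ T] [CompleteSpace T]
    [PartialOrder T] [StarOrderedRing T]
    (K : TwoSidedIdeal T) (hK_closed : IsClosed (K : Set T))
    (γ : AddCircle (1 : ℝ) → (T ≃⋆ₐ[ℂ] T))
    (hγ_grp : ∀ (z w : AddCircle (1 : ℝ)) (x : T), γ (z + w) x = γ z (γ w x))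
    (hγ_cont : ∀ x : T, Continuous fun z => γ z x)
    (hγK : ∀ z : AddCircle (1 : ℝ), (γ z) '' (K : Set T) = (K : Set T))
    (E : T → T)
    (hE : ∀ x : T, E x = ∫ z : AddCircle (1 : ℝ), γ z x)
    (C : Set T) (hC : C = Set.range E)
    (Ck : ℕ → NonUnitalStarSubalgebra ℂ T)
    (hCk_fd : ∀ k, FiniteDimensional ℂ (Ck k))
    (hCk_mono : ∀ k, (Ck k : Set T) ⊆ (Ck (k + 1) : Set T))
    (hCk_sub : ∀ k, (Ck k : Set T) ⊆ C)
    (hCk_dense : C ⊆ closure (⋃ k, (Ck k : Set T)))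
    (Tr : T → ℝ≥0∞)
    (hTr_add : ∀ x y : T, x ∈ C → y ∈ C → 0 ≤ x → 0 ≤ y →
      Tr (x + y) = Tr x + Tr y)
    (hTr_hom : ∀ (c : ℝ) (x : T), 0 ≤ c → x ∈ C → 0 ≤ x →
      Tr (c • x) = ENNReal.ofReal c * Tr x)
    (hTr_lsc : LowerSemicontinuousOn Tr {x : T | x ∈ C ∧ 0 ≤ x})
    (hTr_tracial : ∀ x : T, x ∈ C → Tr (star x * x) = Tr (x * star x))
    (Nφ : Set T) (hNφ : Nφ = {x : T | Tr (E (star x * x)) = 0})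
    (hNφ_ideal : ∃ I : TwoSidedIdeal T, (I : Set T) = Nφ)
    (hCk_Nφ : ∀ k, {x : T | x ∈ Ck k ∧ 0 ≤ x} ∩ Nφ ⊆ (K : Set T)) :
    ∀ p : T, p ∈ C → IsSelfAdjoint p → p * p = p → Tr (E p) = 0 → p ∈ K :=
  statement2_general K E C Ck hCk_fd hCk_dense Tr Nφ hNφ hNφ_ideal hCk_Nφ
end

section
/- Let A be a unital C*-algebra, σ : ℝ → Aut(A) a one-parameter group of *-automorphisms (σ_{s+t} = σ_s ∘ σ_t, σ_0 = id) with t ↦ σ_t(x) norm-continuous for every x ∈ A, let β > 0, and let φ be a KMS_β state for (A, σ): φ is a state on A, and for all x, y ∈ A there is a bounded continuous function F on the closed strip {z ∈ ℂ : 0 ≤ Im z ≤ β}, holomorphic on the open strip {z : 0 < Im z < β}, with F(t) = φ(x·σ_t(y)) and F(t + iβ) = φ(σ_t(y)·x) for all t ∈ ℝ. Then the set N_φ = {x ∈ A : φ(x*x) = 0} is a closed two-sided ideal of A. -/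
/-!
The null set `N_φ` is the set of vectors of GNS seminorm zero. Left multiplication is bounded for
that seminorm, so `N_φ` is a left ideal, and by Cauchy–Schwarz `φ (star x * y) = 0` for `x ∈ N_φ`;
it is closed because positive functionals on a C⋆-algebra are continuous. The KMS condition makes
it self-adjoint: for `x ∈ N_φ` the KMS function of the pair `(star x, x)` vanishes on the real
axis, hence on the whole strip (Phragmén–Lindelöf applied to `exp (i t z) F z` with `t → ∞`), and
its value at `iβ` is `φ (x * star x)`. A self-adjoint left ideal is two-sided.
-/

open ComplexOrder
open Complex Set Filter Topology

namespace PhragmenLindelof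

variable {E : Type*} [NormedAddCommGroup E] [NormedSpace ℂ E] {a b C : ℝ} {f : ℂ → E}

lemma norm_le_mul_exp_of_eq_zero_on_bot (hd : DiffContOnCl ℂ f (im ⁻¹' Ioo a b))
    (hC : ∀ z ∈ im ⁻¹' Icc a b, ‖f z‖ ≤ C) (h₀ : ∀ z : ℂ, z.im = a → f z = 0)
    {t : ℝ} (ht : 0 ≤ t) {z : ℂ} (hz : z ∈ im ⁻¹' Icc a b) :
    ‖f z‖ ≤ C * Real.exp (t * (z.im - b)) := by
  set g : ℂ → E := fun w ↦ exp (t * I * w) • f w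
  have hg : ∀ w, ‖g w‖ = Real.exp (-(t * w.im)) * ‖f w‖ := fun w ↦ by
    simp [g, norm_smul, Complex.norm_exp]
  have hC₀ : 0 ≤ C := (norm_nonneg _).trans (hC z hz)
  have hab : a ≤ b := hz.1.trans hz.2
  have hgz : ‖g z‖ ≤ C * Real.exp (-(t * b)) := by
    refine horizontal_strip ((Differentiable.diffContOnCl (by fun_prop)).smul hd)
      ⟨-1, (neg_one_lt_zero).trans_le (div_nonneg Real.pi_pos.le (sub_nonneg.2 hab)), 0, ?_⟩
      ?_ ?_ hz.1 hz.2
    · refine Asymptotics.IsBigO.of_bound (C * Real.exp (-(t * a))) ?_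
      refine eventually_inf_principal.2 (Eventually.of_forall fun w hw ↦ ?_)
      rw [hg, zero_mul, Real.exp_zero, norm_one, mul_one, mul_comm]
      gcongr
      · exact hC w ⟨hw.1.le, hw.2.le⟩
      · exact hw.1.le
    · intro w hw
      simp only [g, h₀ w hw, smul_zero, norm_zero]
      positivity
    · intro w hw
      rw [hg, hw, mul_comm]
      gcongr
      exact hC w ⟨hw ▸ hab, hw.le⟩
  calc ‖f z‖ = Real.exp (t * z.im) * ‖g z‖ := by
        rw [hg, ← mul_assoc, ← Real.exp_add]; simp
    _ ≤ Real.exp (t * z.im) * (C * Real.exp (-(t * b))) := by gcongr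
    _ = C * Real.exp (t * (z.im - b)) := by
        rw [mul_left_comm, ← Real.exp_add]; ring_nf

theorem eq_zero_on_horizontal_strip_of_eq_zero_on_bot (hab : a < b)
    (hd : DiffContOnCl ℂ f (im ⁻¹' Ioo a b)) (hC : ∀ z ∈ im ⁻¹' Icc a b, ‖f z‖ ≤ C)
    (h₀ : ∀ z : ℂ, z.im = a → f z = 0) :
    EqOn f 0 (im ⁻¹' Icc a b) := by
  have hIco : EqOn f 0 (im ⁻¹' Ico a b) := fun z hz ↦ by
    have hdecay : Tendsto (fun t : ℝ ↦ C * Real.exp (t * (z.im - b))) atTop (𝓝 0) := by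
      simpa using (Real.tendsto_exp_atBot.comp
        (tendsto_id.atTop_mul_const_of_neg (sub_neg.2 hz.2))).const_mul C
    refine norm_le_zero_iff.1 (ge_of_tendsto hdecay ?_)
    filter_upwards [eventually_ge_atTop 0] with t ht
    exact norm_le_mul_exp_of_eq_zero_on_bot hd hC h₀ ht ⟨hz.1, hz.2.le⟩
  refine hIco.of_subset_closure ?_ continuousOn_const (preimage_mono Ico_subset_Icc_self) ?_
  · simpa only [closure_preimage_im, closure_Ioo hab.ne] using hd.continuousOn
  · rw [closure_preimage_im, closure_Ico hab.ne]

end PhragmenLindelof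

lemma map_nonneg_of_map_star_mul_self_nonneg {R M F : Type*} [NonUnitalSemiring R] [StarRing R]
    [PartialOrder R] [StarOrderedRing R] [AddCommMonoid M] [PartialOrder M] [IsOrderedAddMonoid M]
    [FunLike F R M] [AddMonoidHomClass F R M] (φ : F) (hφ : ∀ x, 0 ≤ φ (star x * x)) {a : R}
    (ha : 0 ≤ a) : 0 ≤ φ a := by
  rw [StarOrderedRing.nonneg_iff] at ha
  induction ha using AddSubmonoid.closure_induction with
  | mem _ hx => obtain ⟨x, rfl⟩ := hx; exact hφ x
  | zero => simp
  | add _ _ _ _ hx hy => rw [map_add]; exact add_nonneg hx hy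

theorem Ideal.isTwoSided_of_star_mem {R : Type*} [Semiring R] [StarRing R] (I : Ideal R)
    (hI : ∀ x ∈ I, star x ∈ I) : I.IsTwoSided where
  mul_mem_of_left b ha := by
    simpa using hI _ (I.mul_mem_left (star b) (hI _ ha))

namespace PositiveLinearMap

section NonUnital

variable {A : Type*} [NonUnitalCStarAlgebra A] [PartialOrder A] [StarOrderedRing A]
  (f : A →ₚ[ℂ] ℂ)

lemma norm_toPreGNS_eq_zero_iff {x : A} : ‖f.toPreGNS x‖ = 0 ↔ f (star x * x) = 0 := by
  rw [← sq_eq_zero_iff, ← Complex.ofReal_inj, Complex.ofReal_pow, preGNS_norm_sq]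
  simp

lemma apply_star_mul_eq_zero {x : A} (hx : f (star x * x) = 0) (y : A) :
    f (star x * y) = 0 := by
  have h := norm_inner_le_norm (𝕜 := ℂ) (f.toPreGNS x) (f.toPreGNS y)
  rw [(f.norm_toPreGNS_eq_zero_iff).2 hx, zero_mul] at h
  exact norm_le_zero_iff.1 h

end NonUnital

variable {A : Type*} [CStarAlgebra A] [PartialOrder A] [StarOrderedRing A] (f : A →ₚ[ℂ] ℂ)

def leftKernel : Ideal A where
  carrier := {x | f (star x * x) = 0}
  zero_mem' := by simp
  add_mem' {x y} hx hy := by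
    rw [Set.mem_ofPred_eq, ← norm_toPreGNS_eq_zero_iff] at *
    refine le_antisymm ?_ (norm_nonneg _)
    simpa [hx, hy] using norm_add_le (f.toPreGNS x) (f.toPreGNS y)
  smul_mem' a x hx := by
    rw [Set.mem_ofPred_eq, ← norm_toPreGNS_eq_zero_iff] at *
    refine le_antisymm ?_ (norm_nonneg _)
    simpa [hx] using (f.leftMulMapPreGNS a).le_opNorm (f.toPreGNS x)

lemma isClosed_leftKernel : IsClosed (f.leftKernel : Set A) :=
  isClosed_eq (by fun_prop) continuous_const

end PositiveLinearMap

theorem statement3_general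
    {A : Type*} [NormedRing A] [StarRing A] [CStarRing A]
    [NormedAlgebra ℂ A] [StarModule ℂ A] [CompleteSpace A]
    (σ : ℝ → (A ≃⋆ₐ[ℂ] A))
    (hσ_zero : ∀ x : A, σ 0 x = x)
    (β : ℝ) (hβ : 0 < β)
    (φ : A →ₗ[ℂ] ℂ)
    (hφ_pos : ∀ x : A, 0 ≤ φ (star x * x))
    (hKMS : ∀ x y : A, ∃ F : ℂ → ℂ,
      ContinuousOn F {z : ℂ | 0 ≤ z.im ∧ z.im ≤ β} ∧
      (∃ M : ℝ, ∀ z : ℂ, 0 ≤ z.im → z.im ≤ β → ‖F z‖ ≤ M) ∧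
      DifferentiableOn ℂ F {z : ℂ | 0 < z.im ∧ z.im < β} ∧
      (∀ u : ℝ, F (u : ℂ) = φ (x * σ u y)) ∧
      (∀ u : ℝ, F ((u : ℂ) + (β : ℂ) * Complex.I) = φ (σ u y * x))) :
    IsClosed {x : A | φ (star x * x) = 0} ∧
      ∃ I : TwoSidedIdeal A, (I : Set A) = {x : A | φ (star x * x) = 0} := by
  let _ : CStarAlgebra A := {}
  let _ : PartialOrder A := CStarAlgebra.spectralOrder A
  have _ : StarOrderedRing A := CStarAlgebra.spectralOrderedRing A
  let f : A →ₚ[ℂ] ℂ := .mk₀ φ fun _ ↦ map_nonneg_of_map_star_mul_self_nonneg φ hφ_pos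
  have hstar : ∀ x ∈ f.leftKernel, star x ∈ f.leftKernel := by
    intro x hx
    obtain ⟨F, hcont, ⟨M, hM⟩, hdiff, hF_real, hF_top⟩ := hKMS (star x) x
    have hF : DiffContOnCl ℂ F (im ⁻¹' Ioo 0 β) :=
      ⟨hdiff, by rwa [closure_preimage_im, closure_Ioo hβ.ne]⟩
    have hF_zero := PhragmenLindelof.eq_zero_on_horizontal_strip_of_eq_zero_on_bot hβ hF
      (fun z hz ↦ hM z hz.1 hz.2) fun z hz ↦ by
        rw [← re_add_im z, hz, ofReal_zero, zero_mul, add_zero, hF_real]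
        exact f.apply_star_mul_eq_zero hx _
    have h_top := hF_top 0
    rw [ofReal_zero, zero_add, hσ_zero] at h_top
    change φ (star (star x) * star x) = 0
    rw [star_star, ← h_top]
    exact hF_zero (show (β : ℂ) * I ∈ im ⁻¹' Icc 0 β by simp [hβ.le])
  have := f.leftKernel.isTwoSided_of_star_mem hstar
  exact ⟨f.isClosed_leftKernel, f.leftKernel.toTwoSided, f.leftKernel.coe_toTwoSided⟩

/-- Let `A` be a unital C*-algebra, `σ : ℝ → Aut(A)` a strongly continuous
one-parameter group of *-automorphisms, `β > 0`, and `φ` a KMS_β state for `(A, σ)`: a state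
such that for all `x, y ∈ A` there is a bounded continuous function `F` on the closed strip
`0 ≤ Im z ≤ β`, holomorphic on the open strip, with `F(t) = φ(x σ_t(y))` and
`F(t + iβ) = φ(σ_t(y) x)` for real `t`. Then `N_φ = {x | φ(x*x) = 0}` is a closed two-sided
ideal of `A`. -/
theorem statement3
    {A : Type*} [NormedRing A] [StarRing A] [CStarRing A]
    [NormedAlgebra ℂ A] [StarModule ℂ A] [CompleteSpace A]
    (σ : ℝ → (A ≃⋆ₐ[ℂ] A))
    (hσ_zero : ∀ x : A, σ 0 x = x)
    (hσ_add : ∀ (s u : ℝ) (x : A), σ (s + u) x = σ s (σ u x))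
    (hσ_cont : ∀ x : A, Continuous fun u : ℝ => σ u x)
    (β : ℝ) (hβ : 0 < β)
    (φ : A →ₗ[ℂ] ℂ)
    (hφ_pos : ∀ x : A, 0 ≤ φ (star x * x))
    (hφ_one : φ 1 = 1)
    (hKMS : ∀ x y : A, ∃ F : ℂ → ℂ,
      ContinuousOn F {z : ℂ | 0 ≤ z.im ∧ z.im ≤ β} ∧
      (∃ M : ℝ, ∀ z : ℂ, 0 ≤ z.im → z.im ≤ β → ‖F z‖ ≤ M) ∧
      DifferentiableOn ℂ F {z : ℂ | 0 < z.im ∧ z.im < β} ∧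
      (∀ u : ℝ, F (u : ℂ) = φ (x * σ u y)) ∧
      (∀ u : ℝ, F ((u : ℂ) + (β : ℂ) * Complex.I) = φ (σ u y * x))) :
    IsClosed {x : A | φ (star x * x) = 0} ∧
      ∃ I : TwoSidedIdeal A, (I : Set A) = {x : A | φ (star x * x) = 0} :=
  statement3_general σ hσ_zero β hβ φ hφ_pos hKMS
end

section
/- Fix a real number a ≥ 1, and define sequences p, q : ℕ → ℝ by p(0) = q(0) = 1 and, for n ≥ 1, p(n) = a² · Σ_{k=0}^{n−1} q(k)·p(n−1−k) and q(n) = a^{−2} · Σ_{k=0}^{n−1} p(k)·q(n−1−k). Then for every n ∈ ℕ, ∫_{(a−1/a)²}^{(a+1/a)²} xⁿ · √(4a²x − (a⁴ − 1 − a²x)²)/(2πx) dx = p(n). In particular (taking n = 0), the function x ↦ √(4a²x − (a⁴ − 1 − a²x)²)/(2πx) is a probability density supported on the interval [(a−1/a)², (a+1/a)²] (note that the radicand 4a²x − (a⁴ − 1 − a²x)² is nonnegative exactly on this interval). -/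
/-!
Both sides satisfy the same three-term linear recurrence and agree for `n = 0, 1`.

For `p`: eliminating `q` (note `a⁴ q n = p n` for `n ≥ 1`) shows that the generating function
`P` of `p` solves `X P² - (b + (1 - b²) X) P + b = 0` with `b = a²`. Differentiating this and
eliminating `P` gives a first-order linear differential equation with polynomial coefficients,
i.e. a recurrence of order two.

For the integrals: the radicand is `a⁴ (β - x)(x - α)` with `α = (a - 1/a)²`, `β = (a + 1/a)²`.
Integrating the derivative of `x^k ((β - x)(x - α))^{3/2}` over `[α, β]` gives the same recurrence,
and the first two moments come from the semicircle area and an explicit arcsin antiderivative of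
`√((β - x)(x - α)) / x`.
-/

open Real Set intervalIntegral
open MeasureTheory (volume)

namespace PowerSeries

variable {R : Type*} [CommRing R]

theorem coeff_X_mul_derivative (P : R⟦X⟧) (n : ℕ) :
    coeff n (X * d⁄dX R P) = n * coeff n P := by
  rcases n with _ | n
  · simp
  · rw [coeff_succ_X_mul, coeff_derivative]
    push_cast
    ring

/-- Differentiate the quadratic and eliminate `P`: the polynomial on the left is the discriminant
`(c + (1 - c²) X)² - 4 c X`. -/
theorem derivative_eq_of_quadratic (c : R) (P : R⟦X⟧)
    (h : X * P ^ 2 - (C c + C (1 - c ^ 2) * X) * P + C c = 0) :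
    (C (c ^ 2) - C (2 * c * (1 + c ^ 2)) * X + C ((1 - c ^ 2) ^ 2) * X ^ 2) * (X * d⁄dX R P) =
      C c * ((C (1 + c ^ 2) * X - C c) * P + C c - C (1 - c ^ 2) * X) := by
  have hd : d⁄dX R (X * P ^ 2 - (C c + C (1 - c ^ 2) * X) * P + C c) = 0 := by rw [h]; simp
  simp only [map_add, map_sub, Derivation.leibniz, Derivation.leibniz_pow, derivative_X,
    derivative_C, smul_eq_mul, nsmul_eq_mul] at hd
  simp only [map_mul, map_sub, map_add, map_pow, map_one, map_ofNat] at h hd ⊢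
  linear_combination (-(C c + (1 - C c ^ 2) * X - 2 * X * P) * X) * hd
    + (C c + (1 - C c ^ 2) * X - 2 * X * P - 4 * X ^ 2 * d⁄dX R P - 2 * C c) * h

theorem quadratic_of_convolution {c : R} {p : ℕ → R} (hp0 : p 0 = 1)
    (hconv : ∀ n, ∑ k ∈ Finset.range (n + 1), p k * p (n - k) = c * p (n + 1) + (1 - c ^ 2) * p n) :
    X * mk p ^ 2 - (C c + C (1 - c ^ 2) * X) * mk p + C c = 0 := by
  ext (_ | n)
  · simp [hp0]
  · have hsq : coeff n (mk p ^ 2) = ∑ k ∈ Finset.range (n + 1), p k * p (n - k) := by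
      rw [sq, coeff_mul, Finset.Nat.sum_antidiagonal_eq_sum_range_succ_mk]
      simp
    rw [map_add, map_sub, coeff_succ_X_mul, hsq, hconv, add_mul, map_add, mul_assoc,
      coeff_C_mul, coeff_C_mul, coeff_succ_X_mul]
    simp

theorem recurrence_of_quadratic {c : R} {p : ℕ → R}
    (h : X * mk p ^ 2 - (C c + C (1 - c ^ 2) * X) * mk p + C c = 0) (m : ℕ) :
    c ^ 2 * (m + 3) * p (m + 2) =
      c * (1 + c ^ 2) * (2 * m + 3) * p (m + 1) - m * (1 - c ^ 2) ^ 2 * p m := by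
  have hc := congrArg (coeff (m + 2)) (derivative_eq_of_quadratic c (mk p) h)
  have hQ (n : ℕ) : coeff n (X * d⁄dX R (mk p)) = n * p n := by
    rw [coeff_X_mul_derivative, coeff_mk]
  generalize X * d⁄dX R (mk p) = Q at hc hQ
  simp only [sub_mul, add_mul, map_add, map_sub, mul_assoc, coeff_C_mul, sq X, coeff_succ_X_mul,
    hQ, coeff_mk, coeff_X, coeff_C] at hc
  push_cast at hc
  linear_combination hc

end PowerSeries

section MomentPair

open Finset

variable {K : Type*} [Field K] {c : K} {p q : ℕ → K}

theorem sq_mul_eq_of_moment_pair (hc : c ≠ 0)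
    (hp : ∀ n, 1 ≤ n → p n = c * ∑ k ∈ range n, q k * p (n - 1 - k))
    (hq : ∀ n, 1 ≤ n → q n = c⁻¹ * ∑ k ∈ range n, p k * q (n - 1 - k))
    {n : ℕ} (hn : 1 ≤ n) : c ^ 2 * q n = p n := by
  have hsymm : ∑ k ∈ range n, p k * q (n - 1 - k) = ∑ k ∈ range n, q k * p (n - 1 - k) := by
    rw [← sum_range_reflect]
    refine sum_congr rfl fun k hk => ?_
    rw [Nat.sub_sub_self (by grind), mul_comm]
  rw [hp n hn, hq n hn, hsymm]
  field_simp

theorem convolution_of_moment_pair (hc : c ≠ 0) (hp0 : p 0 = 1) (hq0 : q 0 = 1)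
    (hp : ∀ n, 1 ≤ n → p n = c * ∑ k ∈ range n, q k * p (n - 1 - k))
    (hq : ∀ n, 1 ≤ n → q n = c⁻¹ * ∑ k ∈ range n, p k * q (n - 1 - k)) (n : ℕ) :
    ∑ k ∈ range (n + 1), p k * p (n - k) = c * p (n + 1) + (1 - c ^ 2) * p n := by
  have hpq : ∑ k ∈ range n, p (k + 1) * p (n - (k + 1)) =
      c ^ 2 * ∑ k ∈ range n, q (k + 1) * p (n - (k + 1)) := by
    rw [mul_sum]
    refine sum_congr rfl fun k _ => ?_
    rw [← sq_mul_eq_of_moment_pair hc hp hq (Nat.le_add_left 1 k), mul_assoc]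
  have hsucc := hp (n + 1) (Nat.le_add_left 1 n)
  rw [sum_range_succ', hq0, one_mul, Nat.add_sub_cancel, Nat.sub_zero] at hsucc
  rw [sum_range_succ', hp0, one_mul, Nat.sub_zero, hpq, hsucc]
  ring

theorem recurrence_of_moment_pair (hc : c ≠ 0) (hp0 : p 0 = 1) (hq0 : q 0 = 1)
    (hp : ∀ n, 1 ≤ n → p n = c * ∑ k ∈ range n, q k * p (n - 1 - k))
    (hq : ∀ n, 1 ≤ n → q n = c⁻¹ * ∑ k ∈ range n, p k * q (n - 1 - k)) (m : ℕ) :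
    c ^ 2 * (m + 3) * p (m + 2) =
      c * (1 + c ^ 2) * (2 * m + 3) * p (m + 1) - m * (1 - c ^ 2) ^ 2 * p m :=
  PowerSeries.recurrence_of_quadratic
    (PowerSeries.quadratic_of_convolution hp0 (convolution_of_moment_pair hc hp0 hq0 hp hq)) m

end MomentPair

theorem eq_of_linear_recurrence {R : Type*} [CommRing R] [IsDomain R] {u v c d e : ℕ → R}
    (hc : ∀ m, c m ≠ 0) (hu : ∀ m, c m * u (m + 2) = d m * u (m + 1) + e m * u m)
    (hv : ∀ m, c m * v (m + 2) = d m * v (m + 1) + e m * v m) (h0 : u 0 = v 0) (h1 : u 1 = v 1) :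
    u = v := by
  funext n
  induction n using Nat.strong_induction_on with
  | _ n ih =>
    match n with
    | 0 => exact h0
    | 1 => exact h1
    | m + 2 =>
      refine mul_left_cancel₀ (hc m) ?_
      rw [hu, hv, ih m (by omega), ih (m + 1) (by omega)]

theorem HasDerivAt.arcsin_of_one_sub_sq_eq {f : ℝ → ℝ} {f' s x : ℝ} (hf : HasDerivAt f f' x)
    (hs : 0 < s) (h : 1 - f x ^ 2 = s ^ 2) : HasDerivAt (fun y => arcsin (f y)) (f' / s) x := by
  have hlt : f x ^ 2 < 1 := by nlinarith
  have h1 : f x ≠ -1 := by rintro h'; simp [h'] at hlt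
  have h2 : f x ≠ 1 := by rintro h'; simp [h'] at hlt
  refine ((hasDerivAt_arcsin h1 h2).comp x hf).congr_deriv ?_
  rw [h, sqrt_sq hs.le]
  ring

section SqrtQuadratic

variable {α β x : ℝ}

theorem sub_mul_sub_pos (hx : x ∈ Ioo α β) : 0 < (β - x) * (x - α) :=
  mul_pos (sub_pos.2 hx.2) (sub_pos.2 hx.1)

theorem hasDerivAt_sub_mul_sub (α β x : ℝ) :
    HasDerivAt (fun y => (β - y) * (y - α)) (α + β - 2 * x) x :=
  (((hasDerivAt_id' x).const_sub β).mul ((hasDerivAt_id' x).sub_const α)).congr_deriv (by ring)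

theorem hasDerivAt_sqrt_sub_mul_sub (hx : x ∈ Ioo α β) :
    HasDerivAt (fun y => √((β - y) * (y - α)))
      ((α + β - 2 * x) / (2 * √((β - x) * (x - α)))) x :=
  (hasDerivAt_sub_mul_sub α β x).sqrt (sub_mul_sub_pos hx).ne'

theorem integral_sqrt_sub_mul_sub (h : α ≤ β) :
    ∫ x in α..β, √((β - x) * (x - α)) = π * (β - α) ^ 2 / 8 := by
  rcases h.eq_or_lt with rfl | h
  · simp
  set r := (β - α) / 2
  have hr : 0 < r := by simp only [r]; linarith
  have hsub (t : ℝ) : √((β - (r * t + (α + β) / 2)) * ((r * t + (α + β) / 2) - α)) =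
      r * √(1 - t ^ 2) := by
    rw [show (β - (r * t + (α + β) / 2)) * ((r * t + (α + β) / 2) - α) = r ^ 2 * (1 - t ^ 2) by
      simp only [r]; ring, sqrt_mul (sq_nonneg r), sqrt_sq hr.le]
  have hcomp := integral_comp_mul_add (fun x => √((β - x) * (x - α))) hr.ne' ((α + β) / 2)
    (a := -1) (b := 1)
  simp only [hsub, integral_const_mul, integral_sqrt_one_sub_sq, smul_eq_mul] at hcomp
  rw [show r * -1 + (α + β) / 2 = α by simp only [r]; ring,
    show r * 1 + (α + β) / 2 = β by simp only [r]; ring] at hcomp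
  rw [eq_inv_mul_iff_mul_eq₀ hr.ne'] at hcomp
  rw [← hcomp]
  simp only [r]; ring

/-- At `k = 0` the truncated exponent `k - 1` is harmless: its coefficient vanishes. -/
theorem integral_pow_mul_sqrt_sub_mul_sub_recurrence (h : α ≤ β) (k : ℕ) :
    (k + 3) * ∫ x in α..β, x ^ (k + 1) * √((β - x) * (x - α)) =
      (2 * k + 3) * (α + β) / 2 * (∫ x in α..β, x ^ k * √((β - x) * (x - α))) -
        k * (α * β) * ∫ x in α..β, x ^ (k - 1) * √((β - x) * (x - α)) := by
  have hderiv : ∀ x ∈ Ioo α β,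
      HasDerivAt (fun x => x ^ k * ((β - x) * (x - α) * √((β - x) * (x - α))))
        ((2 * k + 3) * (α + β) / 2 * (x ^ k * √((β - x) * (x - α))) -
          k * (α * β) * (x ^ (k - 1) * √((β - x) * (x - α))) -
          (k + 3) * (x ^ (k + 1) * √((β - x) * (x - α)))) x := by
    intro x hx
    have hw := sub_mul_sub_pos hx
    have hs0 := (sqrt_pos.2 hw).ne'
    refine ((hasDerivAt_pow k x).mul ((hasDerivAt_sub_mul_sub α β x).mul
      (hasDerivAt_sqrt_sub_mul_sub hx))).congr_deriv ?_
    simp only [Pi.mul_apply]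
    field_simp
    rw [sq_sqrt hw.le]
    rcases k with _ | k
    · simp only [CharP.cast_eq_zero, pow_zero]
      ring
    · simp only [Nat.add_sub_cancel, pow_succ]
      push_cast
      ring
  have hint (n : ℕ) : IntervalIntegrable (fun x => x ^ n * √((β - x) * (x - α))) volume α β :=
    (by fun_prop : Continuous _).intervalIntegrable _ _
  have hftc := integral_eq_sub_of_hasDerivAt_of_le h (by fun_prop) hderiv
    ((((hint k).const_mul _).sub ((hint (k - 1)).const_mul _)).sub ((hint (k + 1)).const_mul _))
  rw [integral_sub (((hint k).const_mul _).sub ((hint (k - 1)).const_mul _))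
    ((hint (k + 1)).const_mul _), integral_sub ((hint k).const_mul _) ((hint (k - 1)).const_mul _),
    integral_const_mul, integral_const_mul, integral_const_mul] at hftc
  simp only [sub_self, mul_zero, zero_mul, sqrt_zero] at hftc
  linear_combination -hftc

theorem hasDerivAt_arcsin_affine (hx : x ∈ Ioo α β) :
    HasDerivAt (fun y => arcsin ((2 * y - α - β) / (β - α)))
      (1 / √((β - x) * (x - α))) x := by
  have hw := sub_mul_sub_pos hx
  have hαβ : 0 < β - α := by linarith [hx.1, hx.2]
  have hv : HasDerivAt (fun y => (2 * y - α - β) / (β - α)) (2 / (β - α)) x :=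
    ((((hasDerivAt_id' x).const_mul 2).sub_const α).sub_const β).div_const (β - α) |>.congr_deriv
      (by ring)
  refine (hv.arcsin_of_one_sub_sq_eq (s := 2 * √((β - x) * (x - α)) / (β - α))
    (by positivity) ?_).congr_deriv ?_
  · simp only [div_pow, mul_pow, sq_sqrt hw.le]
    field_simp
    ring
  · field_simp

theorem hasDerivAt_sqrt_mul_arcsin_inv (hα : 0 ≤ α) (hx : x ∈ Ioo α β) :
    HasDerivAt (fun y => √(α * β) * arcsin ((α + β - 2 * α * β / y) / (β - α)))
      (α * β / (x * √((β - x) * (x - α)))) x := by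
  rcases hα.eq_or_lt with rfl | hα
  · simpa using hasDerivAt_const x (0 : ℝ)
  have hw := sub_mul_sub_pos hx
  have hx0 : 0 < x := hα.trans hx.1
  have hβ : 0 < β := hx0.trans hx.2
  have hαβ : 0 < β - α := by linarith [hx.1, hx.2]
  have hu : HasDerivAt (fun y => (α + β - 2 * α * β / y) / (β - α))
      (2 * α * β / (x ^ 2 * (β - α))) x := by
    have := (((hasDerivAt_inv hx0.ne').const_mul (2 * α * β)).const_sub (α + β)).div_const (β - α)
    refine (this.congr_deriv ?_).congr_of_eventuallyEq ?_
    · field_simp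
    · exact Filter.Eventually.of_forall fun y => by simp [div_eq_mul_inv]
  have := (hu.arcsin_of_one_sub_sq_eq
    (s := 2 * √(α * β) * √((β - x) * (x - α)) / ((β - α) * x)) (by positivity) ?_).const_mul
      √(α * β)
  · refine this.congr_deriv ?_
    field_simp
  · simp only [div_pow, mul_pow, sq_sqrt hw.le, sq_sqrt (mul_pos hα hβ).le]
    field_simp
    ring

theorem continuousOn_sqrt_mul_arcsin_inv (hα : 0 ≤ α) :
    ContinuousOn (fun y => √(α * β) * arcsin ((α + β - 2 * α * β / y) / (β - α))) (Icc α β) := by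
  rcases hα.eq_or_lt with rfl | hα
  · simp only [zero_mul, sqrt_zero]
    exact continuousOn_const
  refine continuousOn_const.mul (continuous_arcsin.comp_continuousOn ?_)
  exact (continuousOn_const.sub (continuousOn_const.div continuousOn_id
    fun y hy => (hα.trans_le hy.1).ne')).div_const _

theorem integral_sqrt_sub_mul_sub_div (hα : 0 ≤ α) (h : α < β) :
    ∫ x in α..β, √((β - x) * (x - α)) / x = π / 2 * (√β - √α) ^ 2 := by
  set F : ℝ → ℝ := fun y => √((β - y) * (y - α)) +
    (α + β) / 2 * arcsin ((2 * y - α - β) / (β - α)) -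
    √(α * β) * arcsin ((α + β - 2 * α * β / y) / (β - α))
  have hderiv : ∀ x ∈ Ioo α β, HasDerivAt F (√((β - x) * (x - α)) / x) x := by
    intro x hx
    have hw := sub_mul_sub_pos hx
    have hx0 : 0 < x := hα.trans_lt hx.1
    have hs0 := (sqrt_pos.2 hw).ne'
    refine (((hasDerivAt_sqrt_sub_mul_sub hx).add ((hasDerivAt_arcsin_affine hx).const_mul _)).sub
      (hasDerivAt_sqrt_mul_arcsin_inv hα hx)).congr_deriv ?_
    field_simp
    rw [sq_sqrt hw.le]
    ring
  have hcont : ContinuousOn F (Icc α β) :=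
    (Continuous.continuousOn (by fun_prop)).sub (continuousOn_sqrt_mul_arcsin_inv hα)
  have hint : IntervalIntegrable (fun x => √((β - x) * (x - α)) / x) volume α β :=
    (intervalIntegrable_iff_integrableOn_Ioc_of_le h.le).2 <| integrableOn_deriv_of_nonneg hcont
      hderiv fun x hx => div_nonneg (sqrt_nonneg _) (hα.trans hx.1.le)
  have hβ : 0 < β := hα.trans_lt h
  have hαβ : β - α ≠ 0 := (sub_pos.2 h).ne'
  have hvβ : (2 * β - α - β) / (β - α) = 1 := by field_simp; ring
  have hvα : (2 * α - α - β) / (β - α) = -1 := by field_simp; ring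
  have huβ : (α + β - 2 * α * β / β) / (β - α) = 1 := by field_simp; ring
  have huα : √(α * β) * arcsin ((α + β - 2 * α * β / α) / (β - α)) = -(√(α * β) * (π / 2)) := by
    rcases hα.eq_or_lt with rfl | hα
    · simp
    · rw [show (α + β - 2 * α * β / α) / (β - α) = -1 by field_simp; ring, arcsin_neg_one]
      ring
  rw [integral_eq_sub_of_hasDerivAt_of_le h.le hcont hderiv hint]
  simp only [F, sub_self, zero_mul, mul_zero, sqrt_zero, hvβ, hvα, huβ, huα, arcsin_one,
    arcsin_neg_one]
  rw [sqrt_mul hα]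
  linear_combination (-π / 2) * sq_sqrt hα + (-π / 2) * sq_sqrt hβ.le

/-- Unnormalised moments of the Marchenko–Pastur law supported on `[α, β]`. -/
noncomputable def mpMoment (α β : ℝ) (n : ℕ) : ℝ :=
  ∫ x in α..β, x ^ n * (√((β - x) * (x - α)) / x)

theorem mpMoment_zero (hα : 0 ≤ α) (h : α < β) : mpMoment α β 0 = π / 2 * (√β - √α) ^ 2 := by
  simp [mpMoment, integral_sqrt_sub_mul_sub_div hα h]

theorem mpMoment_succ (hα : 0 ≤ α) (h : α ≤ β) (n : ℕ) :
    mpMoment α β (n + 1) = ∫ x in α..β, x ^ n * √((β - x) * (x - α)) := by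
  refine integral_congr fun x _ => ?_
  rcases eq_or_ne x 0 with rfl | hx0
  · rw [sqrt_eq_zero_of_nonpos (by nlinarith)]
    simp
  · field_simp
    ring

theorem mpMoment_one (hα : 0 ≤ α) (h : α ≤ β) : mpMoment α β 1 = π * (β - α) ^ 2 / 8 := by
  rw [mpMoment_succ hα h]
  simpa using integral_sqrt_sub_mul_sub h

theorem mpMoment_recurrence (hα : 0 ≤ α) (h : α ≤ β) (m : ℕ) :
    (m + 3) * mpMoment α β (m + 2) =
      (2 * m + 3) * (α + β) / 2 * mpMoment α β (m + 1) - m * (α * β) * mpMoment α β m := by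
  rw [mpMoment_succ hα h, mpMoment_succ hα h]
  rcases m with _ | m
  · simpa using integral_pow_mul_sqrt_sub_mul_sub_recurrence h 0
  · rw [mpMoment_succ hα h]
    exact_mod_cast integral_pow_mul_sqrt_sub_mul_sub_recurrence h (m + 1)

end SqrtQuadratic

section Parameters

variable {a : ℝ}

theorem radicand_eq (ha : a ≠ 0) (x : ℝ) :
    4 * a ^ 2 * x - (a ^ 4 - 1 - a ^ 2 * x) ^ 2 =
      a ^ 4 * (((a + 1 / a) ^ 2 - x) * (x - (a - 1 / a) ^ 2)) := by
  field_simp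
  ring

theorem sub_inv_sq_lt_add_inv_sq (ha : a ≠ 0) : (a - 1 / a) ^ 2 < (a + 1 / a) ^ 2 := by
  have h4 : (a + 1 / a) ^ 2 - (a - 1 / a) ^ 2 = 4 := by
    field_simp
    ring
  linarith

theorem integral_pow_mul_density (ha : a ≠ 0) (n : ℕ) :
    ∫ x in (a - 1 / a) ^ 2..(a + 1 / a) ^ 2,
      x ^ n * (√(4 * a ^ 2 * x - (a ^ 4 - 1 - a ^ 2 * x) ^ 2) / (2 * π * x)) =
      a ^ 2 / (2 * π) * mpMoment ((a - 1 / a) ^ 2) ((a + 1 / a) ^ 2) n := by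
  rw [mpMoment, ← integral_const_mul]
  refine integral_congr fun x _ => ?_
  rw [radicand_eq ha, sqrt_mul (by positivity), show a ^ 4 = (a ^ 2) ^ 2 by ring,
    sqrt_sq (by positivity)]
  ring

theorem mpMoment_zero_of_one_le (ha : 1 ≤ a) :
    mpMoment ((a - 1 / a) ^ 2) ((a + 1 / a) ^ 2) 0 = 2 * π / a ^ 2 := by
  have ha0 : 0 < a := by positivity
  have hsub : 0 ≤ a - 1 / a := by
    rw [sub_nonneg, div_le_iff₀ ha0]
    nlinarith
  rw [mpMoment_zero (sq_nonneg _) (sub_inv_sq_lt_add_inv_sq ha0.ne'), sqrt_sq hsub,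
    sqrt_sq (by positivity)]
  field_simp
  ring

theorem mpMoment_one_of_ne_zero (ha : a ≠ 0) :
    mpMoment ((a - 1 / a) ^ 2) ((a + 1 / a) ^ 2) 1 = 2 * π := by
  rw [mpMoment_one (sq_nonneg _) (sub_inv_sq_lt_add_inv_sq ha).le]
  field_simp
  ring

theorem mpMoment_recurrence_of_ne_zero (ha : a ≠ 0) (m : ℕ) :
    a ^ 4 * (m + 3) * mpMoment ((a - 1 / a) ^ 2) ((a + 1 / a) ^ 2) (m + 2) =
      a ^ 2 * (a ^ 4 + 1) * (2 * m + 3) * mpMoment ((a - 1 / a) ^ 2) ((a + 1 / a) ^ 2) (m + 1) -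
        m * (a ^ 4 - 1) ^ 2 * mpMoment ((a - 1 / a) ^ 2) ((a + 1 / a) ^ 2) m := by
  have hsum : a ^ 4 * (((a - 1 / a) ^ 2 + (a + 1 / a) ^ 2) / 2) = a ^ 2 * (a ^ 4 + 1) := by
    field_simp
    ring
  have hprod : a ^ 4 * ((a - 1 / a) ^ 2 * (a + 1 / a) ^ 2) = (a ^ 4 - 1) ^ 2 := by
    field_simp
    ring
  linear_combination a ^ 4 * mpMoment_recurrence (sq_nonneg _) (sub_inv_sq_lt_add_inv_sq ha).le m
    + (2 * m + 3) * mpMoment ((a - 1 / a) ^ 2) ((a + 1 / a) ^ 2) (m + 1) * hsum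
    - m * mpMoment ((a - 1 / a) ^ 2) ((a + 1 / a) ^ 2) m * hprod

end Parameters

/-- Fix `a ≥ 1` and let `p, q : ℕ → ℝ` be the moment sequences determined by
`p 0 = q 0 = 1`, `p n = a² Σ_{k<n} q k · p (n-1-k)`, `q n = a⁻² Σ_{k<n} p k · q (n-1-k)`.
Then for every `n`, `∫_{(a-1/a)²}^{(a+1/a)²} xⁿ √(4a²x - (a⁴-1-a²x)²)/(2πx) dx = p n`;
in particular (for `n = 0`) the integrand is a probability density supported on
`[(a-1/a)², (a+1/a)²]`, the radicand being nonnegative exactly on this interval. -/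
theorem statement4
    (a : ℝ) (ha : 1 ≤ a)
    (p q : ℕ → ℝ) (hp0 : p 0 = 1) (hq0 : q 0 = 1)
    (hp : ∀ n : ℕ, 1 ≤ n →
      p n = a ^ 2 * ∑ k ∈ Finset.range n, q k * p (n - 1 - k))
    (hq : ∀ n : ℕ, 1 ≤ n →
      q n = (a ^ 2)⁻¹ * ∑ k ∈ Finset.range n, p k * q (n - 1 - k)) :
    (∀ n : ℕ,
      (∫ x in ((a - 1 / a) ^ 2)..((a + 1 / a) ^ 2),
        x ^ n * (Real.sqrt (4 * a ^ 2 * x - (a ^ 4 - 1 - a ^ 2 * x) ^ 2) /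
          (2 * Real.pi * x))) = p n) ∧
    (∀ x : ℝ, 0 ≤ 4 * a ^ 2 * x - (a ^ 4 - 1 - a ^ 2 * x) ^ 2 ↔
      x ∈ Set.Icc ((a - 1 / a) ^ 2) ((a + 1 / a) ^ 2)) := by
  have ha0 : a ≠ 0 := by positivity
  refine ⟨fun n => ?_, fun x => ?_⟩
  · rw [integral_pow_mul_density ha0]
    refine congrFun (eq_of_linear_recurrence
      (u := fun n => a ^ 2 / (2 * π) * mpMoment ((a - 1 / a) ^ 2) ((a + 1 / a) ^ 2) n)
      (c := fun m => a ^ 4 * (m + 3)) (d := fun m => a ^ 2 * (a ^ 4 + 1) * (2 * m + 3))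
      (e := fun m => -(m * (a ^ 4 - 1) ^ 2)) (fun m => by positivity)
      (fun m => by linear_combination a ^ 2 / (2 * π) * mpMoment_recurrence_of_ne_zero ha0 m)
      (fun m => by
        linear_combination recurrence_of_moment_pair (pow_ne_zero 2 ha0) hp0 hq0 hp hq m)
      ?_ ?_) n
    · rw [mpMoment_zero_of_one_le ha, hp0]
      field_simp
    · rw [mpMoment_one_of_ne_zero ha0, hp 1 le_rfl]
      simp only [Finset.range_one, Finset.sum_singleton, hp0, hq0]
      field_simp
  · rw [radicand_eq ha0, mul_nonneg_iff_of_pos_left (by positivity),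
      show ∀ α β : ℝ, (β - x) * (x - α) = -((x - α) * (x - β)) from fun _ _ => by ring,
      neg_nonneg, sub_mul_sub_nonpos_iff x (sub_inv_sq_lt_add_inv_sq ha0).le]
    rfl
end

section
/- Fix a real number a > 0, and define sequences p, q : ℕ → ℝ by p(0) = q(0) = 1 and, for n ≥ 1, p(n) = a² · Σ_{k=0}^{n−1} q(k)·p(n−1−k) and q(n) = a^{−2} · Σ_{k=0}^{n−1} p(k)·q(n−1−k). Then q(n) = a^{−4}·p(n) for every integer n ≥ 1. Consequently, if μ_α, μ_β > 0 and a = (μ_α/μ_β)^{1/4}, then μ_β·p(n) = μ_α·q(n) for all n ≥ 1 (the traciality identity Tr_μ((T_{ε'}*T_{ε'})ⁿ) = Tr_μ((T_{ε'}T_{ε'}*)ⁿ) of the paper). -/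
/-!
Reversing the order of summation shows that the two convolution sums in the recurrences agree,
so `p n = a² S` and `q n = a⁻² S` for the same `S`; hence `q n = a⁻⁴ p n`. With `a⁴ = μ_α / μ_β`
this is the identity `μ_β p n = μ_α q n`.
-/

open Finset

theorem Finset.sum_range_mul_reflect {R : Type*} [CommSemiring R] (f g : ℕ → R) (n : ℕ) :
    ∑ k ∈ range n, f k * g (n - 1 - k) = ∑ k ∈ range n, g k * f (n - 1 - k) := by
  rw [← sum_range_reflect]
  refine sum_congr rfl fun k hk => ?_
  rw [Nat.sub_sub_self (Nat.le_sub_one_of_lt (mem_range.mp hk)), mul_comm]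

theorem inv_sq_mul_mul {K : Type*} [Field K] (c x : K) : (c ^ 2)⁻¹ * (c * x) = c⁻¹ * x := by
  rcases eq_or_ne c 0 with rfl | hc
  · simp
  · field_simp

theorem eq_inv_sq_mul_of_convolution_eq {K : Type*} [Field K] (c : K) (p q : ℕ → K) (n : ℕ)
    (hp : p n = c * ∑ k ∈ range n, q k * p (n - 1 - k))
    (hq : q n = c⁻¹ * ∑ k ∈ range n, p k * q (n - 1 - k)) :
    q n = (c ^ 2)⁻¹ * p n := by
  rw [hq, hp, inv_sq_mul_mul, sum_range_mul_reflect]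

theorem statement5_general
    (a : ℝ)
    (p q : ℕ → ℝ)
    (hp : ∀ n : ℕ, 1 ≤ n →
      p n = a ^ 2 * ∑ k ∈ Finset.range n, q k * p (n - 1 - k))
    (hq : ∀ n : ℕ, 1 ≤ n →
      q n = (a ^ 2)⁻¹ * ∑ k ∈ Finset.range n, p k * q (n - 1 - k)) :
    (∀ n : ℕ, 1 ≤ n → q n = (a ^ 4)⁻¹ * p n) ∧
    (∀ μα μβ : ℝ, 0 < μα → 0 < μβ → a = (μα / μβ) ^ ((1 : ℝ) / 4) →
      ∀ n : ℕ, 1 ≤ n → μβ * p n = μα * q n) := by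
  have hqp : ∀ n : ℕ, 1 ≤ n → q n = (a ^ 4)⁻¹ * p n := fun n hn => by
    simpa only [← pow_mul] using eq_inv_sq_mul_of_convolution_eq _ p q n (hp n hn) (hq n hn)
  refine ⟨hqp, fun μα μβ hμα hμβ ha n hn => ?_⟩
  have ha4 : a ^ 4 = μα / μβ := by
    rw [ha, one_div]
    exact_mod_cast Real.rpow_inv_natCast_pow (div_pos hμα hμβ).le four_ne_zero
  rw [hqp n hn, ha4]
  field_simp

/-- Fix `a > 0` and let `p, q : ℕ → ℝ` be the moment sequences determined by
`p 0 = q 0 = 1`, `p n = a² Σ_{k<n} q k · p (n-1-k)`, `q n = a⁻² Σ_{k<n} p k · q (n-1-k)`.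
Then `q n = a⁻⁴ · p n` for all `n ≥ 1`. Consequently, if `μ_α, μ_β > 0` and
`a = (μ_α/μ_β)^{1/4}`, then `μ_β · p n = μ_α · q n` for all `n ≥ 1`. -/
theorem statement5
    (a : ℝ) (ha : 0 < a)
    (p q : ℕ → ℝ) (hp0 : p 0 = 1) (hq0 : q 0 = 1)
    (hp : ∀ n : ℕ, 1 ≤ n →
      p n = a ^ 2 * ∑ k ∈ Finset.range n, q k * p (n - 1 - k))
    (hq : ∀ n : ℕ, 1 ≤ n →
      q n = (a ^ 2)⁻¹ * ∑ k ∈ Finset.range n, p k * q (n - 1 - k)) :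
    (∀ n : ℕ, 1 ≤ n → q n = (a ^ 4)⁻¹ * p n) ∧
    (∀ μα μβ : ℝ, 0 < μα → 0 < μβ → a = (μα / μβ) ^ ((1 : ℝ) / 4) →
      ∀ n : ℕ, 1 ≤ n → μβ * p n = μα * q n) :=
  statement5_general a p q hp hq
end

section
/- Fix a real number a ≥ 1, and define sequences p, q : ℕ → ℝ by p(0) = q(0) = 1 and, for n ≥ 1, p(n) = a² · Σ_{k=0}^{n−1} q(k)·p(n−1−k) and q(n) = a^{−2} · Σ_{k=0}^{n−1} p(k)·q(n−1−k). Then for every real x > (a + 1/a)², the series Σ_{n=0}^∞ p(n)·x^{−(n+1)} converges absolutely, and its sum equals (a²x − (a⁴ − 1) − a²·√((x − (a−1/a)²)·(x − (a+1/a)²)))/(2x), where √ denotes the nonnegative square root. (This is the Cauchy transform of the normalized law of T_{ε'}*T_{ε'} computed in the paper.) -/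
/-!
Put `u n = p n / x ^ (n + 1)` and `v n = q n / x ^ (n + 1)`. The recursions become
`u (m + 1) = a² (v ⋆ u) m` and `v (m + 1) = a⁻² (u ⋆ v) m` (Cauchy products) with
`u 0 = v 0 = 1 / x`, so the sums `G = ∑ u`, `H = ∑ v` solve `G = 1/x + a² H G`,
`H = 1/x + a⁻² G H`. Eliminating `H` gives the quadratic `x G² - (a² x - (a⁴ - 1)) G + a² = 0`,
whose smaller root `g` is the stated value.

For convergence, `g` together with `h = a² / (x (a² - g))` is a nonnegative solution of the same
fixed-point system. The recursions are monotone, so an induction bounds the partial sums of `u`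
and `v` by `g` and `h`. Hence `G ≤ g`, and `G`, being a root, must be the smaller root `g`.
-/

open Finset

lemma sum_range_sum_mul_le_mul_sum {f g : ℕ → ℝ} (hf : ∀ k, 0 ≤ f k) (hg : ∀ k, 0 ≤ g k)
    (N : ℕ) :
    ∑ m ∈ range N, ∑ k ∈ range (m + 1), f k * g (m - k) ≤
      (∑ k ∈ range N, f k) * ∑ k ∈ range N, g k := by
  rw [sum_range_diag_flip N fun k j => f k * g j, sum_mul]
  refine sum_le_sum fun k _ => ?_
  rw [← mul_sum]
  exact mul_le_mul_of_nonneg_left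
    (sum_le_sum_of_subset_of_nonneg (range_mono (Nat.sub_le N k)) fun j _ _ => hg j) (hf k)

def ConvRec (α : ℝ) (u v : ℕ → ℝ) : Prop :=
  ∀ m, u (m + 1) = α * ∑ k ∈ range (m + 1), v k * u (m - k)

namespace ConvRec

variable {α β : ℝ} {u v : ℕ → ℝ}

lemma div_pow (h : ConvRec α u v) {x : ℝ} (hx : x ≠ 0) :
    ConvRec α (fun n => u n / x ^ (n + 1)) (fun n => v n / x ^ (n + 1)) := by
  intro m
  simp only [h m, mul_sum, sum_div]
  refine sum_congr rfl fun k hk => ?_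
  have hxk : x ^ (m + 1 + 1) = x ^ (k + 1) * x ^ (m - k + 1) := by
    rw [← pow_add]
    congr 1
    have := mem_range.1 hk
    omega
  rw [hxk]
  field_simp

lemma nonneg (hu : ConvRec α u v) (hv : ConvRec β v u) (hα : 0 ≤ α) (hβ : 0 ≤ β)
    (hu0 : 0 ≤ u 0) (hv0 : 0 ≤ v 0) (n : ℕ) : 0 ≤ u n ∧ 0 ≤ v n := by
  induction n using Nat.strong_induction_on with
  | _ n ih =>
    cases n with
    | zero => exact ⟨hu0, hv0⟩
    | succ m =>
      have hlt : ∀ k ∈ range (m + 1), k < m + 1 ∧ m - k < m + 1 := fun k hk =>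
        ⟨mem_range.1 hk, by omega⟩
      rw [hu m, hv m]
      exact ⟨mul_nonneg hα (sum_nonneg fun k hk =>
          mul_nonneg (ih k (hlt k hk).1).2 (ih _ (hlt k hk).2).1),
        mul_nonneg hβ (sum_nonneg fun k hk =>
          mul_nonneg (ih k (hlt k hk).1).1 (ih _ (hlt k hk).2).2)⟩

lemma sum_range_succ_le (h : ConvRec α u v) (hα : 0 ≤ α) (hu : ∀ n, 0 ≤ u n)
    (hv : ∀ n, 0 ≤ v n) (N : ℕ) :
    ∑ n ∈ range (N + 1), u n ≤ u 0 + α * ((∑ n ∈ range N, v n) * ∑ n ∈ range N, u n) := by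
  rw [sum_range_succ', add_comm]
  gcongr u 0 + ?_
  calc ∑ m ∈ range N, u (m + 1)
      = α * ∑ m ∈ range N, ∑ k ∈ range (m + 1), v k * u (m - k) := by
        rw [mul_sum]
        exact sum_congr rfl fun m _ => h m
    _ ≤ _ := mul_le_mul_of_nonneg_left (sum_range_sum_mul_le_mul_sum hv hu N) hα

lemma sum_range_le (hu : ConvRec α u v) (hv : ConvRec β v u) (hα : 0 ≤ α) (hβ : 0 ≤ β)
    (hu_nonneg : ∀ n, 0 ≤ u n) (hv_nonneg : ∀ n, 0 ≤ v n) {g h : ℝ} (hg : 0 ≤ g) (hh : 0 ≤ h)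
    (hug : u 0 + α * (h * g) ≤ g) (hvh : v 0 + β * (g * h) ≤ h) (N : ℕ) :
    ∑ n ∈ range N, u n ≤ g ∧ ∑ n ∈ range N, v n ≤ h := by
  induction N with
  | zero => simpa using ⟨hg, hh⟩
  | succ N ih =>
    have hU : 0 ≤ ∑ n ∈ range N, u n := sum_nonneg fun n _ => hu_nonneg n
    have hV : 0 ≤ ∑ n ∈ range N, v n := sum_nonneg fun n _ => hv_nonneg n
    constructor
    · calc _ ≤ _ := hu.sum_range_succ_le hα hu_nonneg hv_nonneg N
        _ ≤ u 0 + α * (h * g) := by gcongr; exacts [ih.2, ih.1]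
        _ ≤ g := hug
    · calc _ ≤ _ := hv.sum_range_succ_le hβ hv_nonneg hu_nonneg N
        _ ≤ v 0 + β * (g * h) := by gcongr; exacts [ih.1, ih.2]
        _ ≤ h := hvh

lemma tsum_eq (h : ConvRec α u v) (hu : Summable fun n => ‖u n‖)
    (hv : Summable fun n => ‖v n‖) :
    ∑' n, u n = u 0 + α * ((∑' n, v n) * ∑' n, u n) := by
  rw [tsum_mul_tsum_eq_tsum_sum_range_of_summable_norm hv hu, ← tsum_mul_left,
    hu.of_norm.tsum_eq_zero_add]
  exact congrArg _ (tsum_congr h)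

end ConvRec

section CauchyTransform

variable {a x : ℝ}

noncomputable def cauchyTransform (a x : ℝ) : ℝ :=
  (a ^ 2 * x - (a ^ 4 - 1) -
    a ^ 2 * Real.sqrt ((x - (a - 1 / a) ^ 2) * (x - (a + 1 / a) ^ 2))) / (2 * x)

lemma sq_add_one_sq_lt_mul (ha : a ≠ 0) (hx : (a + 1 / a) ^ 2 < x) :
    (a ^ 2 + 1) ^ 2 < a ^ 2 * x := by
  have h : a ^ 2 * (a + 1 / a) ^ 2 = (a ^ 2 + 1) ^ 2 := by field_simp
  rw [← h]
  exact mul_lt_mul_of_pos_left hx (by positivity)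

lemma sq_mul_sqrt_disc (ha : a ≠ 0) (hx : (a + 1 / a) ^ 2 < x) :
    (a ^ 2 * Real.sqrt ((x - (a - 1 / a) ^ 2) * (x - (a + 1 / a) ^ 2))) ^ 2 =
      (a ^ 2 * x - (a ^ 4 - 1)) ^ 2 - 4 * a ^ 2 * x := by
  have h4 : (a + 1 / a) ^ 2 - (a - 1 / a) ^ 2 = 4 := by field_simp; ring
  rw [mul_pow, Real.sq_sqrt (mul_nonneg (by linarith) (by linarith))]
  field_simp
  ring

lemma cauchyTransform_quadratic (ha : a ≠ 0) (hx : (a + 1 / a) ^ 2 < x) :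
    x * cauchyTransform a x ^ 2 - (a ^ 2 * x - (a ^ 4 - 1)) * cauchyTransform a x + a ^ 2 = 0 := by
  have hx0 : x ≠ 0 := (lt_of_le_of_lt (sq_nonneg _) hx).ne'
  have hS := sq_mul_sqrt_disc ha hx
  unfold cauchyTransform
  generalize Real.sqrt ((x - (a - 1 / a) ^ 2) * (x - (a + 1 / a) ^ 2)) = S at hS ⊢
  field_simp
  linear_combination hS

lemma cauchyTransform_pos (ha : a ≠ 0) (hx : (a + 1 / a) ^ 2 < x) : 0 < cauchyTransform a x := by
  have hx0 : 0 < x := lt_of_le_of_lt (sq_nonneg _) hx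
  have hB : 0 < a ^ 2 * x - (a ^ 4 - 1) := by nlinarith [sq_add_one_sq_lt_mul ha hx]
  have hS : (a ^ 2 * Real.sqrt ((x - (a - 1 / a) ^ 2) * (x - (a + 1 / a) ^ 2))) ^ 2 <
      (a ^ 2 * x - (a ^ 4 - 1)) ^ 2 := by
    rw [sq_mul_sqrt_disc ha hx]
    have : 0 < a ^ 2 * x := by positivity
    linarith
  exact div_pos (sub_pos.2 (lt_of_pow_lt_pow_left₀ 2 hB.le hS)) (by positivity)

lemma cauchyTransform_lt_sq (ha : a ≠ 0) (hx : (a + 1 / a) ^ 2 < x) :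
    cauchyTransform a x < a ^ 2 := by
  have hx0 : 0 < x := lt_of_le_of_lt (sq_nonneg _) hx
  have hS : 0 ≤ a ^ 2 * Real.sqrt ((x - (a - 1 / a) ^ 2) * (x - (a + 1 / a) ^ 2)) := by positivity
  rw [cauchyTransform, div_lt_iff₀ (by positivity)]
  nlinarith [sq_add_one_sq_lt_mul ha hx]

lemma eq_cauchyTransform_of_quadratic (ha : a ≠ 0) (hx : (a + 1 / a) ^ 2 < x) {y : ℝ}
    (hy : x * y ^ 2 - (a ^ 2 * x - (a ^ 4 - 1)) * y + a ^ 2 = 0) (hle : y ≤ cauchyTransform a x) :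
    y = cauchyTransform a x := by
  have hx0 : 0 < x := lt_of_le_of_lt (sq_nonneg _) hx
  set g := cauchyTransform a x with hg
  have hS : 0 ≤ a ^ 2 * Real.sqrt ((x - (a - 1 / a) ^ 2) * (x - (a + 1 / a) ^ 2)) := by positivity
  have h2g : 2 * x * g = a ^ 2 * x - (a ^ 4 - 1) -
      a ^ 2 * Real.sqrt ((x - (a - 1 / a) ^ 2) * (x - (a + 1 / a) ^ 2)) := by
    rw [hg, cauchyTransform]; field_simp
  have hroots : (y - g) * (x * (y + g) - (a ^ 2 * x - (a ^ 4 - 1))) = 0 := by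
    linear_combination hy - cauchyTransform_quadratic ha hx
  rcases mul_eq_zero.1 hroots with h | h
  · linarith
  · -- otherwise `y` is the larger root of the quadratic, which is at least `g`
    nlinarith [mul_le_mul_of_nonneg_left hle hx0.le]

end CauchyTransform

section FixedPoint

variable {a x g h : ℝ}

lemma quadratic_of_fixedPoint (ha : a ≠ 0) (hx : x ≠ 0) (hg : g = 1 / x + a ^ 2 * (h * g))
    (hh : h = 1 / x + (a ^ 2)⁻¹ * (g * h)) :
    x * g ^ 2 - (a ^ 2 * x - (a ^ 4 - 1)) * g + a ^ 2 = 0 := by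
  field_simp at hg hh
  linear_combination (g - a ^ 2) * hg - a ^ 2 * g * hh

lemma fixedPoint_of_quadratic (ha : a ≠ 0) (hx : x ≠ 0)
    (hg : x * g ^ 2 - (a ^ 2 * x - (a ^ 4 - 1)) * g + a ^ 2 = 0)
    (hh : x * h * (a ^ 2 - g) = a ^ 2) :
    g = 1 / x + a ^ 2 * (h * g) ∧ h = 1 / x + (a ^ 2)⁻¹ * (g * h) := by
  have hga : a ^ 2 - g ≠ 0 := by
    rintro hga
    rw [hga, mul_zero] at hh
    exact pow_ne_zero 2 ha hh.symm
  have hg' : (a ^ 2 - g) * (g * x - 1 - a ^ 2 * h * g * x) = 0 := by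
    linear_combination -hg - a ^ 2 * g * hh
  constructor
  · field_simp
    linear_combination (mul_eq_zero.1 hg').resolve_left hga
  · field_simp
    linear_combination hh

end FixedPoint

/-- Fix `a ≥ 1` and let `p, q : ℕ → ℝ` be the moment sequences determined by
`p 0 = q 0 = 1`, `p n = a² Σ_{k<n} q k · p (n-1-k)`, `q n = a⁻² Σ_{k<n} p k · q (n-1-k)`.
Then for every real `x > (a + 1/a)²`, the series `Σ_n p(n) x^{-(n+1)}` converges absolutely
and its sum (the Cauchy transform of the law of `T_{ε'}* T_{ε'}`) equals
`(a²x - (a⁴ - 1) - a² √((x - (a-1/a)²)(x - (a+1/a)²)))/(2x)`. -/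
theorem statement7
    (a : ℝ) (ha : 1 ≤ a)
    (p q : ℕ → ℝ) (hp0 : p 0 = 1) (hq0 : q 0 = 1)
    (hp : ∀ n : ℕ, 1 ≤ n →
      p n = a ^ 2 * ∑ k ∈ Finset.range n, q k * p (n - 1 - k))
    (hq : ∀ n : ℕ, 1 ≤ n →
      q n = (a ^ 2)⁻¹ * ∑ k ∈ Finset.range n, p k * q (n - 1 - k)) :
    ∀ x : ℝ, (a + 1 / a) ^ 2 < x →
      Summable (fun n : ℕ => |p n / x ^ (n + 1)|) ∧
      ∑' n : ℕ, p n / x ^ (n + 1) =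
        (a ^ 2 * x - (a ^ 4 - 1) -
          a ^ 2 * Real.sqrt ((x - (a - 1 / a) ^ 2) * (x - (a + 1 / a) ^ 2))) / (2 * x) := by
  intro x hx
  have ha0 : a ≠ 0 := (zero_lt_one.trans_le ha).ne'
  have hx0 : 0 < x := lt_of_le_of_lt (sq_nonneg _) hx
  set u : ℕ → ℝ := fun n => p n / x ^ (n + 1)
  set v : ℕ → ℝ := fun n => q n / x ^ (n + 1)
  have hu : ConvRec (a ^ 2) u v :=
    ConvRec.div_pow (fun m => by rw [hp (m + 1) m.succ_pos, Nat.add_sub_cancel]) hx0.ne'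
  have hv : ConvRec (a ^ 2)⁻¹ v u :=
    ConvRec.div_pow (fun m => by rw [hq (m + 1) m.succ_pos, Nat.add_sub_cancel]) hx0.ne'
  have hu0 : u 0 = 1 / x := by simp [u, hp0]
  have hv0 : v 0 = 1 / x := by simp [v, hq0]
  have huv := hu.nonneg hv (by positivity) (by positivity) (by rw [hu0]; positivity)
    (by rw [hv0]; positivity)
  have hg_pos := cauchyTransform_pos ha0 hx
  have hg_lt := sub_pos.2 (cauchyTransform_lt_sq ha0 hx)
  obtain ⟨hug, hvh⟩ := fixedPoint_of_quadratic (h := a ^ 2 / (x * (a ^ 2 - cauchyTransform a x)))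
    ha0 hx0.ne' (cauchyTransform_quadratic ha0 hx) (by field_simp)
  have hbound := hu.sum_range_le hv (by positivity) (by positivity) (fun n => (huv n).1)
    (fun n => (huv n).2) hg_pos.le (by positivity) (hu0 ▸ hug.ge) (hv0 ▸ hvh.ge)
  have hsu : Summable u := summable_of_sum_range_le (fun n => (huv n).1) fun N => (hbound N).1
  have hsv : Summable v := summable_of_sum_range_le (fun n => (huv n).2) fun N => (hbound N).2
  refine ⟨hsu.abs, eq_cauchyTransform_of_quadratic ha0 hx ?_ ?_⟩
  · have hG := hu.tsum_eq hsu.abs hsv.abs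
    have hH := hv.tsum_eq hsv.abs hsu.abs
    rw [hu0] at hG
    rw [hv0] at hH
    exact quadratic_of_fixedPoint ha0 hx0.ne' hG hH
  · exact Real.tsum_le_of_sum_range_le (fun n => (huv n).1) fun N => (hbound N).1
end
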